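/- arXiv:1510.06381 — 2 statements merged into one kernel-verified Lean document; each statement's English description precedes it below -/
import Mathlib

section
/- Let Λ̄ be a weighted FLC set supported on an FLC set S̄. Then every element Λ of the hull X_{Λ̄} (the vague closure of the 𝔾-orbit {Λ̄ * δ_t : t ∈ 𝔾}) is a measure supported on some point set S belonging to the hull X_{S̄} of S̄. -/
open MeasureTheory Filter Topology Set Pointwise CompactlySupported

noncomputable section

variable {G : Type*} [AddCommGroup G] [TopologicalSpace G] [IsTopologicalAddGroup G]

/-- The translate `x ↦ φ (x + t)` of a compactly supported continuous function. -/
def translateCc (t : G) (φ : C_c(G, ℂ)) : C_c(G, ℂ) :=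
  ⟨⟨fun x => φ (x + t), φ.continuous.comp (continuous_add_right t)⟩,
    φ.hasCompactSupport.comp_homeomorph (Homeomorph.addRight t)⟩

/-- The reflection `x ↦ φ (-x)` of a compactly supported continuous function. -/
def negCc (φ : C_c(G, ℂ)) : C_c(G, ℂ) :=
  ⟨⟨fun x => φ (-x), φ.continuous.comp continuous_neg⟩,
    φ.hasCompactSupport.comp_homeomorph (Homeomorph.neg G)⟩

/-- The translate `Λ * δ_t` of a complex Radon measure, viewed as a functional on `C_c(G, ℂ)`:
`∫ φ d(Λ * δ_t) = ∫ φ(s + t) dΛ(s)`. -/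
def mulDelta (Λ : C_c(G, ℂ) → ℂ) (t : G) : C_c(G, ℂ) → ℂ := fun φ => Λ (translateCc t φ)

/-- A functional on `C_c(G, ℂ)` is linear. -/
def IsLinearFunc (Λ : C_c(G, ℂ) → ℂ) : Prop :=
  ∀ (c : ℂ) (φ ψ : C_c(G, ℂ)), Λ (c • φ + ψ) = c * Λ φ + Λ ψ

/-- `|Λ| (A) ≤ M` in the Riesz sense: any test function supported in `A` and bounded by `1`
is sent to a number of modulus at most `M`. -/
def AbsBoundedOn (Λ : C_c(G, ℂ) → ℂ) (A : Set G) (M : ℝ) : Prop :=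
  ∀ φ : C_c(G, ℂ), tsupport φ ⊆ A → (∀ x, ‖φ x‖ ≤ 1) → ‖Λ φ‖ ≤ M

/-- `(K, M)`-translation-boundedness: `|Λ| (K + t) ≤ M` for all `t`. -/
def IsTransBddWith (Λ : C_c(G, ℂ) → ℂ) (K : Set G) (M : ℝ) : Prop :=
  ∀ t : G, AbsBoundedOn Λ ((fun x => x + t) '' K) M

/-- A translation-bounded (complex Radon) measure on `G`, viewed as a functional. -/
def IsTranslationBounded (Λ : C_c(G, ℂ) → ℂ) : Prop :=
  IsLinearFunc Λ ∧
    ∃ (K : Set G) (M : ℝ), IsCompact K ∧ (interior K).Nonempty ∧ IsTransBddWith Λ K M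

/-- A measured dynamical system of translation-bounded measures: a compact `G`-stable set `X`
of `(K, M)`-translation-bounded measures (with the vague = product topology), carrying a
`G`-invariant Borel probability measure. -/
structure TBSystem (G : Type*) [AddCommGroup G] [TopologicalSpace G]
    [IsTopologicalAddGroup G] where
  K : Set G
  M : ℝ
  hK : IsCompact K
  hKint : (interior K).Nonempty
  X : Set (C_c(G, ℂ) → ℂ)
  hXcompact : IsCompact X
  hlin : ∀ Λ ∈ X, IsLinearFunc Λ
  hbdd : ∀ Λ ∈ X, IsTransBddWith Λ K M
  hstable : ∀ Λ ∈ X, ∀ t : G, mulDelta Λ t ∈ X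
  m : Measure (C_c(G, ℂ) → ℂ)
  hprob : IsProbabilityMeasure m
  hconc : m Xᶜ = 0
  hinv : ∀ t : G, Measure.map (fun Λ => mulDelta Λ t) m = m

/-- Ergodicity of a system of translation-bounded measures. -/
def TBSystem.IsErgodic (S : TBSystem G) : Prop :=
  ∀ A : Set (C_c(G, ℂ) → ℂ), MeasurableSet A →
    (∀ t : G, (fun Λ => mulDelta Λ t) ⁻¹' A = A) → S.m A = 0 ∨ S.m A = 1

/-- Full (topological) support of the measure of the system. -/
def TBSystem.HasFullSupport (S : TBSystem G) : Prop :=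
  ∀ U : Set (C_c(G, ℂ) → ℂ), IsOpen U → (U ∩ S.X).Nonempty → S.m U ≠ 0

/-- A Borel factor map between measured dynamical systems of translation-bounded measures. -/
def IsBorelFactorMap (S S' : TBSystem G) (π : (C_c(G, ℂ) → ℂ) → (C_c(G, ℂ) → ℂ)) : Prop :=
  Measurable π ∧ (∀ᵐ Λ ∂S.m, π Λ ∈ S'.X) ∧
    (∀ t : G, ∀ᵐ Λ ∂S.m, π (mulDelta Λ t) = mulDelta (π Λ) t) ∧
    Measure.map π S.m = S'.m

/-- The natural functions `N_φ (Λ) = ∫ φ(-s) dΛ(s)` on spaces of measures. -/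
def NN (φ : C_c(G, ℂ)) (Λ : C_c(G, ℂ) → ℂ) : ℂ := Λ (negCc φ)

/-- The Pontryagin dual: continuous unimodular characters of `G`. -/
def DualGrp (G : Type*) [AddCommGroup G] [TopologicalSpace G] : Type _ :=
  { ω : C(G, ℂ) // (∀ x, ‖ω x‖ = 1) ∧ ∀ x y, ω (x + y) = ω x * ω y }

instance : TopologicalSpace (DualGrp G) :=
  inferInstanceAs (TopologicalSpace
    { ω : C(G, ℂ) // (∀ x, ‖ω x‖ = 1) ∧ ∀ x y, ω (x + y) = ω x * ω y })

instance : MeasurableSpace (DualGrp G) := borel _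

variable [MeasurableSpace G]

/-- The Fourier transform `φ̂(ω) = ∫ φ(t) conj (ω t) dμ(t)` of a test function, with respect
to a (Haar) measure `μ` on `G`. -/
def ccFourier (μ : Measure G) (φ : C_c(G, ℂ)) (ω : DualGrp G) : ℂ :=
  ∫ t, φ t * (starRingEnd ℂ) (ω.1 t) ∂μ

/-- `γ` is the diffraction measure of the system `S`, with respect to the Haar measure `μ`:
`∫ φ̂ conj ψ̂ dγ = ∫ N_φ conj N_ψ dm` for all test functions `φ ψ`. -/
def IsDiffraction (μ : Measure G) (S : TBSystem G) (γ : Measure (DualGrp G)) : Prop :=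
  ∀ φ ψ : C_c(G, ℂ),
    ∫ ω, ccFourier μ φ ω * (starRingEnd ℂ) (ccFourier μ ψ ω) ∂γ
      = ∫ Λ, NN φ Λ * (starRingEnd ℂ) (NN ψ Λ) ∂S.m

/-- A pure point (purely atomic) measure: concentrated on a countable set. -/
def IsPurePointMeasure {α : Type*} [MeasurableSpace α] (γ : Measure α) : Prop :=
  ∃ D : Set α, D.Countable ∧ γ Dᶜ = 0

/-- A continuous measure: no atoms. -/
def IsContinuousMeasure {α : Type*} [MeasurableSpace α] (γ : Measure α) : Prop :=
  ∀ x : α, γ {x} = 0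


/-- A complex measure (as a functional) is supported on the set `A`. -/
def IsSupportedOn (Λ : C_c(G, ℂ) → ℂ) (A : Set G) : Prop :=
  ∀ φ : C_c(G, ℂ), (∀ x ∈ A, φ x = 0) → Λ φ = 0

/-- `x` is an isolated point of `D`. -/
def IsolatedIn (D : Set G) (x : G) : Prop := ∃ U ∈ 𝓝 x, U ∩ D ⊆ {x}

/-- A point set of finite local complexity: it is uniformly discrete (0 is isolated in `S - S`)
and its difference set `S - S` is closed with all its points isolated. -/
def IsFLC (S : Set G) : Prop :=
  (∃ U ∈ 𝓝 (0 : G), U ∩ (S - S) ⊆ {0}) ∧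
    IsClosed (S - S) ∧ ∀ x ∈ S - S, IsolatedIn (S - S) x

/-- The hull of a translation-bounded measure: the vague closure of its `G`-orbit. -/
def hullF (Λb : C_c(G, ℂ) → ℂ) : Set (C_c(G, ℂ) → ℂ) :=
  closure {Λ | ∃ t : G, Λ = mulDelta Λb t}

/-- The translate `S - t` of a point set. -/
def setTranslate (S : Set G) (t : G) : Set G := (fun x => x + t) ⁻¹' S

/-- The hull (in the local topology) of a point set `Sb`: the point sets `S'` each of whose
basic neighborhoods `O_{U,K}(S')` contains a translate of `Sb`. -/
def pointHull (Sb : Set G) : Set (Set G) :=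
  {S' : Set G | ∀ U ∈ 𝓝 (0 : G), ∀ K : Set G, IsCompact K →
    ∃ t : G, ∃ s ∈ U, S' ∩ K = setTranslate Sb (t + s) ∩ K}


/-!
Choose an ultrafilter `𝒱` on `G` along which the translates `Λb * δ_t` converge vaguely to `Λ`,
and let `S` be the limit of the translates `t + Sb` along `𝒱`: the points every neighbourhood of
which eventually meets `t + Sb`.

`Λ` is supported on `S`: if a test function `φ` vanishes on `S`, then by compactness of its
support, for `𝒱`-almost all `t` it is smaller than `ε` on `t + Sb`, so `Λb * δ_t` takes the same
value on `φ` as on the truncation of `φ` at height `ε`, which translation boundedness bounds by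
`C ε`.

`S` lies in the hull of `Sb`: by finite local complexity a compact window `L` meets the
translates `t + Sb` in only finitely many patterns up to translation, so along `𝒱` the pattern is
eventually `p t + Q` for a fixed finite `Q`, with `p t → p₀`. Then `S` coincides with `p₀ + Q`
inside `L`, and on a smaller window this is a translate of `Sb`.
-/

section LinearFunctionals

variable {X : Type*} [TopologicalSpace X] {Λ : C_c(X, ℂ) → ℂ}

theorem IsLinearFunc.map_zero (h : IsLinearFunc Λ) : Λ 0 = 0 := by
  simpa using h 1 0 0

def IsLinearFunc.toLinearMap (h : IsLinearFunc Λ) : C_c(X, ℂ) →ₗ[ℂ] ℂ where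
  toFun := Λ
  map_add' φ ψ := by simpa using h 1 φ ψ
  map_smul' c φ := by simpa [h.map_zero] using h c φ 0

theorem IsSupportedOn.apply_eq_of_eqOn {S : Set X} (h : IsSupportedOn Λ S)
    (hlin : IsLinearFunc Λ) {φ ψ : C_c(X, ℂ)} (hφψ : EqOn φ ψ S) : Λ φ = Λ ψ :=
  sub_eq_zero.1 <| (hlin.toLinearMap.map_sub φ ψ).symm.trans <|
    h _ fun _ hx => sub_eq_zero.2 (hφψ hx)

theorem isClosed_setOf_isSupportedOn (S : Set X) :
    IsClosed {Λ : C_c(X, ℂ) → ℂ | IsSupportedOn Λ S} := by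
  simp only [IsSupportedOn, ofPred_forall]
  exact isClosed_iInter fun φ => isClosed_iInter fun _ =>
    isClosed_eq (continuous_apply φ) continuous_const

theorem AbsBoundedOn.norm_apply_le {A : Set X} {M : ℝ} (h : AbsBoundedOn Λ A M)
    (hlin : IsLinearFunc Λ) {φ : C_c(X, ℂ)} (hφ : tsupport φ ⊆ A) {b : ℝ} (hb : 0 < b)
    (hφb : ∀ x, ‖φ x‖ ≤ b) : ‖Λ φ‖ ≤ M * b := by
  set c : ℂ := (b : ℂ)⁻¹
  have hc : ‖c‖ = b⁻¹ := by simp [c, abs_of_pos hb]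
  have hsupp : tsupport (c • φ) ⊆ A := by
    rw [CompactlySupportedContinuousMap.coe_smul]
    exact (tsupport_smul_subset_right (fun _ => c) φ).trans hφ
  have key := h (c • φ) hsupp fun x => by
    rw [CompactlySupportedContinuousMap.smul_apply, norm_smul, hc]
    exact inv_mul_le_one_of_le₀ (hφb x) hb.le
  rw [show Λ (c • φ) = c * Λ φ from hlin.toLinearMap.map_smul c φ, norm_mul, hc,
    inv_mul_le_iff₀ hb] at key
  linarith

-- Truncation by the radial retraction `z ↦ ε z / max ε ‖z‖` of `ℂ` onto the closed `ε`-ball.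
theorem CompactlySupportedContinuousMap.exists_norm_le_eq_of_norm_le (φ : C_c(X, ℂ)) {ε : ℝ}
    (hε : 0 < ε) : ∃ ψ : C_c(X, ℂ),
      tsupport ψ ⊆ tsupport φ ∧ (∀ x, ‖ψ x‖ ≤ ε) ∧ ∀ x, ‖φ x‖ ≤ ε → ψ x = φ x := by
  set g : ℂ → ℂ := fun z => ((ε / max ε ‖z‖ : ℝ) : ℂ) * z
  have hg0 : g 0 = 0 := by simp [g]
  have hg : Continuous g := by
    refine (Complex.continuous_ofReal.comp ?_).mul continuous_id
    exact continuous_const.div (continuous_const.max continuous_norm) fun z =>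
      (hε.trans_le (le_max_left _ _)).ne'
  refine ⟨⟨⟨g ∘ φ, hg.comp φ.continuous⟩, φ.hasCompactSupport.comp_left hg0⟩,
    tsupport_comp_subset hg0 φ, fun x => ?_, fun x hx => ?_⟩
  · show ‖g (φ x)‖ ≤ ε
    have hmax : 0 < max ε ‖φ x‖ := hε.trans_le (le_max_left _ _)
    rw [norm_mul, Complex.norm_real, Real.norm_of_nonneg (div_pos hε hmax).le,
      div_mul_eq_mul_div, div_le_iff₀ hmax]
    exact mul_le_mul_of_nonneg_left (le_max_right _ _) hε.le
  · show g (φ x) = φ x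
    simp [g, max_eq_left hx, hε.ne']

end LinearFunctionals

section Translates

variable {G : Type*} [AddCommGroup G] [TopologicalSpace G] {Λ : C_c(G, ℂ) → ℂ}

theorem IsLinearFunc.mulDelta [IsTopologicalAddGroup G] (h : IsLinearFunc Λ) (t : G) :
    IsLinearFunc (mulDelta Λ t) :=
  fun c φ ψ => h c (translateCc t φ) (translateCc t ψ)

theorem tsupport_translateCc [IsTopologicalAddGroup G] (t : G) (φ : C_c(G, ℂ)) :
    tsupport (translateCc t φ) = (· + t) ⁻¹' tsupport φ :=
  tsupport_comp_eq_preimage φ (Homeomorph.addRight t)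

theorem IsSupportedOn.mulDelta [IsTopologicalAddGroup G] {S : Set G} (h : IsSupportedOn Λ S)
    (t : G) : IsSupportedOn (mulDelta Λ t) (t +ᵥ S) := fun φ hφ =>
  h _ fun x hx => by
    simpa [translateCc, add_comm] using hφ (t + x) (vadd_mem_vadd_set hx)

theorem IsTransBddWith.absBoundedOn_mulDelta [IsTopologicalAddGroup G] {K : Set G} {M : ℝ}
    (h : IsTransBddWith Λ K M) (t : G) : AbsBoundedOn (mulDelta Λ t) K M := fun φ hφ hφ1 =>
  h (-t) (translateCc t φ) (by
    rw [tsupport_translateCc, image_add_right, neg_neg]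
    exact preimage_mono hφ) fun x => hφ1 (x + t)

theorem IsTransBddWith.exists_isTransBddWith_of_isCompact [IsTopologicalAddGroup G] [T2Space G]
    [LocallyCompactSpace G] {K L : Set G} {M : ℝ} (h : IsTransBddWith Λ K M)
    (hlin : IsLinearFunc Λ) (hK : (interior K).Nonempty) (hL : IsCompact L) :
    ∃ C, IsTransBddWith Λ L C := by
  obtain ⟨n, c, hc⟩ : ∃ n, ∃ c : Fin n → G, L ⊆ ⋃ i, (c i + ·) ⁻¹' interior K := by
    obtain ⟨s, hs⟩ := compact_covered_by_add_left_translates hL (by rwa [interior_interior])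
    refine ⟨s.card, fun i => s.equivFin.symm i, hs.trans fun x hx => ?_⟩
    obtain ⟨g, hg, hxg⟩ := mem_iUnion₂.1 hx
    exact mem_iUnion.2 ⟨s.equivFin ⟨g, hg⟩, by simpa using hxg⟩
  refine ⟨n * M, fun t φ hφ hφ1 => ?_⟩
  have hφc : tsupport φ ⊆ ⋃ i, (c i + · - t) ⁻¹' interior K := fun x hx => by
    obtain ⟨y, hy, rfl⟩ := hφ hx
    simpa [← add_assoc] using hc hy
  obtain ⟨f, hfc, hf1, hf01, -⟩ := exists_continuous_sum_one_of_isOpen_isCompact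
    (fun i => isOpen_interior.preimage (by fun_prop)) φ.hasCompactSupport hφc
  have hsum : φ = ∑ i, f i • φ := by
    ext x
    simp only [CompactlySupportedContinuousMap.coe_sum, Finset.sum_apply,
      CompactlySupportedContinuousMap.smulc_apply, ← Finset.sum_smul]
    by_cases hx : x ∈ tsupport φ
    · simpa using (congrArg (· • φ x) (hf1 hx)).symm
    · simp [image_eq_zero_of_notMem_tsupport hx]
  have hpiece : ∀ i, ‖Λ (f i • φ)‖ ≤ M := fun i => by
    refine h (t - c i) _ ((tsupport_smul_subset_left _ _).trans ((hfc i).trans fun x hx => ?_))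
      fun x => ?_
    · exact ⟨c i + x - t, interior_subset hx, by abel_nf⟩
    · rw [CompactlySupportedContinuousMap.smulc_apply, norm_smul,
        Real.norm_of_nonneg (hf01 i x).1]
      exact mul_le_one₀ (hf01 i x).2 (norm_nonneg _) (hφ1 x)
  calc ‖Λ φ‖ = ‖∑ i, Λ (f i • φ)‖ :=
        congrArg norm ((congrArg Λ hsum).trans (map_sum hlin.toLinearMap _ _))
    _ ≤ ∑ i, ‖Λ (f i • φ)‖ := norm_sum_le _ _
    _ ≤ n * M := (Finset.sum_le_sum fun i _ => hpiece i).trans_eq (by simp)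

theorem exists_ultrafilter_tendsto_mulDelta [IsTopologicalAddGroup G] {Λb : C_c(G, ℂ) → ℂ}
    (hΛ : Λ ∈ hullF Λb) : ∃ 𝒱 : Ultrafilter G, Tendsto (mulDelta Λb) 𝒱 (𝓝 Λ) := by
  have : (comap (mulDelta Λb) (𝓝 Λ)).NeBot := comap_neBot fun s hs => by
    obtain ⟨_, hs', t, rfl⟩ := mem_closure_iff_nhds.1 hΛ s hs
    exact ⟨t, hs'⟩
  exact ⟨Ultrafilter.of _, tendsto_comap.mono_left (Ultrafilter.of_le _)⟩

end Translates

theorem IsCompact.exists_tendsto_ultrafilter {X α : Type*} [TopologicalSpace X] {K : Set X}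
    (hK : IsCompact K) {𝒱 : Ultrafilter α} {f : α → X} (hf : ∀ᶠ a in (𝒱 : Filter α), f a ∈ K) :
    ∃ x ∈ K, Tendsto f 𝒱 (𝓝 x) :=
  hK.ultrafilter_le_nhds' (𝒱.map f) hf

theorem Ultrafilter.exists_eventually_eq_of_finite {α β : Type*} {𝒱 : Ultrafilter α}
    {f : α → β} {s : Set β} (hs : s.Finite) (hf : ∀ᶠ a in (𝒱 : Filter α), f a ∈ s) :
    ∃ b ∈ s, ∀ᶠ a in (𝒱 : Filter α), f a = b := by
  obtain ⟨b, hb, hfb⟩ := Ultrafilter.eq_pure_of_finite_mem hs (show s ∈ 𝒱.map f from hf)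
  exact ⟨b, hb, show {b} ∈ 𝒱.map f by rw [hfb]; exact mem_pure.2 rfl⟩

theorem inter_vadd_eq_of_inter_eq {G : Type*} [AddGroup G] {K L A B : Set G} {δ : G}
    (hKL : δ +ᵥ K ⊆ L) (h : L ∩ A = L ∩ B) : (-δ +ᵥ A) ∩ K = (-δ +ᵥ B) ∩ K := by
  ext x
  simp only [mem_inter_iff, mem_vadd_set_iff_neg_vadd_mem, neg_neg]
  refine and_congr_left fun hx => ?_
  have hδx : δ +ᵥ x ∈ L := hKL (vadd_mem_vadd_set hx)
  exact ⟨fun hA => (h.subset ⟨hδx, hA⟩).2, fun hB => (h.symm.subset ⟨hδx, hB⟩).2⟩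

section LimitSet

variable {G : Type*} [AddCommGroup G] [TopologicalSpace G] {Sb : Set G} {𝒱 : Ultrafilter G}

/-- The limit of the translates `t +ᵥ Sb` along `𝒱`, in the sense of Kuratowski. -/
def limitSet (Sb : Set G) (𝒱 : Ultrafilter G) : Set G :=
  {x | ∀ V ∈ 𝓝 x, ∀ᶠ t in (𝒱 : Filter G), (V ∩ (t +ᵥ Sb)).Nonempty}

theorem mem_limitSet {x : G} :
    x ∈ limitSet Sb 𝒱 ↔ ∀ V ∈ 𝓝 x, ∀ᶠ t in (𝒱 : Filter G), (V ∩ (t +ᵥ Sb)).Nonempty :=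
  Iff.rfl

theorem mem_limitSet_of_tendsto {y : G → G} {x : G} (hy : ∀ᶠ t in (𝒱 : Filter G), y t ∈ t +ᵥ Sb)
    (hyx : Tendsto y 𝒱 (𝓝 x)) : x ∈ limitSet Sb 𝒱 :=
  mem_limitSet.2 fun _ hV => (hy.and (hyx hV)).mono fun t ht => ⟨y t, ht.2, ht.1⟩

theorem eventually_inter_vadd_subset {L O : Set G} (hL : IsCompact L) (hO : IsOpen O)
    (hLO : limitSet Sb 𝒱 ∩ L ⊆ O) : ∀ᶠ t in (𝒱 : Filter G), L ∩ (t +ᵥ Sb) ⊆ O := by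
  by_contra h
  obtain ⟨y, hy⟩ : ∃ y : G → G, ∀ᶠ t in (𝒱 : Filter G), y t ∈ L ∩ (t +ᵥ Sb) ∧ y t ∉ O :=
    Eventually.choice <| (Ultrafilter.eventually_not.2 h).mono fun t ht => by
      simpa [not_subset] using ht
  obtain ⟨x, hx, hyx⟩ :=
    (hL.diff hO).exists_tendsto_ultrafilter (hy.mono fun t ht => ⟨ht.1.1, ht.2⟩)
  exact hx.2 (hLO ⟨mem_limitSet_of_tendsto (hy.mono fun t ht => ht.1.2) hyx, hx.1⟩)

theorem exists_eventually_inter_vadd_eq {L : Set G} (hL : IsCompact L)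
    (hfin : ((Sb - Sb) ∩ (L - L)).Finite) (𝒱 : Ultrafilter G) :
    ∃ (Q : Set G) (p : G → G) (p₀ : G), Q.Finite ∧ Tendsto p 𝒱 (𝓝 p₀) ∧
      ∀ᶠ t in (𝒱 : Filter G), L ∩ (t +ᵥ Sb) = p t +ᵥ Q := by
  by_cases hne : ∀ᶠ t in (𝒱 : Filter G), (L ∩ (t +ᵥ Sb)).Nonempty
  · obtain ⟨p, hp⟩ := hne.choice
    obtain ⟨p₀, -, hp₀⟩ := hL.exists_tendsto_ultrafilter (hp.mono fun t ht => ht.1)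
    have hshape : ∀ᶠ t in (𝒱 : Filter G),
        -p t +ᵥ (L ∩ (t +ᵥ Sb)) ∈ {Q | Q ⊆ (Sb - Sb) ∩ (L - L)} := by
      filter_upwards [hp] with t ⟨hpL, s₀, hs₀, hps⟩
      rintro _ ⟨_, ⟨hyL, s, hs, rfl⟩, rfl⟩
      refine ⟨⟨s, hs, s₀, hs₀, ?_⟩, ⟨t +ᵥ s, hyL, p t, hpL, ?_⟩⟩ <;>
        simp only [vadd_eq_add, ← hps] <;> abel
    obtain ⟨Q, hQ, hQt⟩ := Ultrafilter.exists_eventually_eq_of_finite hfin.finite_subsets hshape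
    exact ⟨Q, p, p₀, hfin.subset hQ, hp₀, hQt.mono fun t ht => by rw [← ht, vadd_neg_vadd]⟩
  · refine ⟨∅, 0, 0, finite_empty, tendsto_const_nhds, ?_⟩
    filter_upwards [Ultrafilter.eventually_not.2 hne] with t ht
    simpa [not_nonempty_iff_eq_empty] using ht

variable {L Q : Set G} {p : G → G} {p₀ : G}

theorem vadd_subset_limitSet [ContinuousAdd G] (hp : Tendsto p 𝒱 (𝓝 p₀))
    (hpat : ∀ᶠ t in (𝒱 : Filter G), L ∩ (t +ᵥ Sb) = p t +ᵥ Q) : p₀ +ᵥ Q ⊆ limitSet Sb 𝒱 := by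
  rintro _ ⟨q, hq, rfl⟩
  refine mem_limitSet_of_tendsto (hpat.mono fun t ht => ?_) (hp.add_const q)
  exact (ht.symm ▸ vadd_mem_vadd_set hq : p t +ᵥ q ∈ L ∩ (t +ᵥ Sb)).2

theorem limitSet_inter_interior_subset [ContinuousAdd G] [T2Space G] (hQ : Q.Finite)
    (hp : Tendsto p 𝒱 (𝓝 p₀)) (hpat : ∀ᶠ t in (𝒱 : Filter G), L ∩ (t +ᵥ Sb) = p t +ᵥ Q) :
    limitSet Sb 𝒱 ∩ interior L ⊆ p₀ +ᵥ Q := by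
  rintro x ⟨hx, hxL⟩
  by_contra hxQ
  obtain ⟨A, B, hA, hB, hxA, hQB, hAB⟩ := SeparatedNhds.of_isCompact_isCompact
    isCompact_singleton (hQ.vadd_set (a := p₀)).isCompact (disjoint_singleton_left.2 hxQ)
  have hnear : ∀ᶠ t in (𝒱 : Filter G), p t +ᵥ Q ⊆ B := by
    have := (eventually_all_finite hQ).2 fun q hq =>
      (hp.add_const q).eventually (hB.mem_nhds (hQB (vadd_mem_vadd_set hq)))
    exact this.mono fun t ht => by rintro _ ⟨q, hq, rfl⟩; exact ht q hq
  obtain ⟨t, ⟨y, ⟨hyA, hyL⟩, hyS⟩, hpat_t, hB_t⟩ := ((mem_limitSet.1 hx _ (inter_mem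
    (hA.mem_nhds (hxA rfl)) (isOpen_interior.mem_nhds hxL))).and (hpat.and hnear)).exists
  have hy : y ∈ p t +ᵥ Q := hpat_t ▸ ⟨interior_subset hyL, hyS⟩
  exact disjoint_left.1 hAB hyA (hB_t hy)

theorem mem_pointHull_of_forall_isCompact {S : Set G}
    (h : ∀ K, IsCompact K → ∃ t : G, S ∩ K = (t +ᵥ Sb) ∩ K) : S ∈ pointHull Sb := by
  intro U hU K hK
  obtain ⟨t, ht⟩ := h K hK
  refine ⟨-t, 0, mem_of_mem_nhds hU, ?_⟩
  rw [ht]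
  ext x
  simp [setTranslate, mem_vadd_set_iff_neg_vadd_mem, add_comm]

theorem limitSet_mem_pointHull [IsTopologicalAddGroup G] [T2Space G] [LocallyCompactSpace G]
    (hfin : ∀ L, IsCompact L → ((Sb - Sb) ∩ (L - L)).Finite) (𝒱 : Ultrafilter G) :
    limitSet Sb 𝒱 ∈ pointHull Sb := by
  refine mem_pointHull_of_forall_isCompact fun K hK => ?_
  obtain ⟨C, hC, hC0⟩ := exists_compact_mem_nhds (0 : G)
  have hKC : K ⊆ interior (K + C) := fun x hx =>
    subset_interior_add_right ⟨x, hx, 0, mem_interior_iff_mem_nhds.2 hC0, add_zero x⟩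
  obtain ⟨Q, p, p₀, hQ, hp, hpat⟩ := exists_eventually_inter_vadd_eq (hK.add hC)
    (hfin _ (hK.add hC)) 𝒱
  obtain ⟨t, hpat_t, hδ⟩ :=
    (hpat.and ((hp.sub_const p₀).eventually_mem (by rwa [sub_self]))).exists
  set δ := p t - p₀
  have hδK : δ +ᵥ K ⊆ K + C := by
    rintro _ ⟨x, hx, rfl⟩
    exact ⟨x, hx, δ, hδ, add_comm _ _⟩
  have hwindow : (K + C) ∩ (t +ᵥ Sb) = (K + C) ∩ (p t +ᵥ Q) := by
    rw [hpat_t, inter_eq_right.2 (hpat_t ▸ inter_subset_left)]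
  refine ⟨-δ + t, ?_⟩
  calc limitSet Sb 𝒱 ∩ K = (p₀ +ᵥ Q) ∩ K :=
        Subset.antisymm
          (fun x hx => ⟨limitSet_inter_interior_subset hQ hp hpat ⟨hx.1, hKC hx.2⟩, hx.2⟩)
          (inter_subset_inter_left K (vadd_subset_limitSet hp hpat))
    _ = (-δ +ᵥ (p t +ᵥ Q)) ∩ K := by rw [vadd_vadd, neg_sub, sub_add_cancel]
    _ = (-δ +ᵥ (t +ᵥ Sb)) ∩ K := (inter_vadd_eq_of_inter_eq hδK hwindow).symm
    _ = ((-δ + t) +ᵥ Sb) ∩ K := by rw [vadd_vadd]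

theorem isSupportedOn_limitSet [IsTopologicalAddGroup G] {Λb Λ : C_c(G, ℂ) → ℂ}
    (hlin : IsLinearFunc Λb) (hsupp : IsSupportedOn Λb Sb)
    (hbdd : ∀ L, IsCompact L → ∃ C, IsTransBddWith Λb L C)
    (hΛ : Tendsto (mulDelta Λb) 𝒱 (𝓝 Λ)) : IsSupportedOn Λ (limitSet Sb 𝒱) := by
  intro φ hφ
  obtain ⟨C, hC⟩ := hbdd _ φ.hasCompactSupport
  suffices h : ∀ ε > 0, ‖Λ φ‖ ≤ C * ε by
    have hlim : Tendsto (fun ε => C * ε) (𝓝[>] 0) (𝓝 0) := by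
      simpa using ((continuous_const_mul C).tendsto 0).mono_left nhdsWithin_le_nhds
    exact norm_le_zero_iff.1 (ge_of_tendsto hlim (eventually_nhdsWithin_of_forall h))
  intro ε hε
  obtain ⟨ψ, hψφ, hψε, hψ⟩ := φ.exists_norm_le_eq_of_norm_le hε
  have hsmall : ∀ᶠ t in (𝒱 : Filter G), tsupport φ ∩ (t +ᵥ Sb) ⊆ {x | ‖φ x‖ < ε} :=
    eventually_inter_vadd_subset φ.hasCompactSupport
      (isOpen_lt (continuous_norm.comp φ.continuous) continuous_const)
      fun x hx => by simpa [hφ x hx.1] using hε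
  refine le_of_tendsto (tendsto_pi_nhds.1 hΛ φ).norm (hsmall.mono fun t ht => ?_)
  have heq : mulDelta Λb t φ = mulDelta Λb t ψ := by
    refine (hsupp.mulDelta t).apply_eq_of_eqOn (hlin.mulDelta t) fun x hx => (hψ x ?_).symm
    by_cases hxφ : x ∈ tsupport φ
    · exact (ht ⟨hxφ, hx⟩).le
    · simpa [image_eq_zero_of_notMem_tsupport hxφ] using hε.le
  rw [heq]
  exact (hC.absBoundedOn_mulDelta t).norm_apply_le (hlin.mulDelta t) hψφ hε hψε

end LimitSet

namespace IsFLC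

variable {G : Type*} [AddCommGroup G] [TopologicalSpace G] {S : Set G}

theorem isDiscrete_sub (hS : IsFLC S) : IsDiscrete (S - S) :=
  IsDiscrete.of_nhdsWithin fun x hx => by
    obtain ⟨U, hU, hUx⟩ := hS.2.2 x hx
    exact le_pure_iff.2 (mem_of_superset (inter_mem_nhdsWithin _ hU) (by rwa [inter_comm]))

theorem finite_sub_inter_sub [IsTopologicalAddGroup G] (hS : IsFLC S) {L : Set G}
    (hL : IsCompact L) : ((S - S) ∩ (L - L)).Finite := by
  have hLL : IsCompact (L - L) := by simpa only [sub_eq_add_neg] using hL.add hL.neg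
  exact (hLL.inter_left hS.2.1).finite (hS.isDiscrete_sub.mono inter_subset_left)

-- `closure {0}` lies in every neighbourhood of `0` and, `S - S` being closed, in `S - S`.
theorem t2Space [IsTopologicalAddGroup G] (hS : IsFLC S) (hne : S.Nonempty) : T2Space G := by
  obtain ⟨⟨U, hU, hUS⟩, hcl, -⟩ := hS
  obtain ⟨s, hs⟩ := hne
  refine IsTopologicalAddGroup.t2Space_iff_zero_closed.2
    (closure_subset_iff_isClosed.1 fun y hy => ?_)
  have h0y : (0 : G) ⤳ y := specializes_iff_mem_closure.2 hy
  refine hUS ⟨mem_of_mem_nhds (h0y.symm.nhds_le_nhds hU), hcl.closure_subset_iff.2 ?_ hy⟩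
  exact singleton_subset_iff.2 ⟨s, hs, s, hs, sub_self s⟩

end IsFLC

/-- Let `Λb` be a weighted FLC set supported on an FLC set `Sb`.  Then every
element `Λ` of the hull of `Λb` (the vague closure of its `G`-orbit) is supported on some point
set `S` belonging to the hull of `Sb`. -/
theorem hull_of_weighted_FLC_supported
    (Λb : C_c(G, ℂ) → ℂ) (hTB : IsTranslationBounded Λb)
    (Sb : Set G) (hFLC : IsFLC Sb) (hsupp : IsSupportedOn Λb Sb) :
    ∀ Λ ∈ hullF Λb, ∃ S ∈ pointHull Sb, IsSupportedOn Λ S := by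
  intro Λ hΛ
  obtain ⟨hlin, K, M, hK, hKint, hKM⟩ := hTB
  rcases Sb.eq_empty_or_nonempty with rfl | hSb
  · refine ⟨∅, mem_pointHull_of_forall_isCompact fun _ _ => ⟨0, by simp⟩, ?_⟩
    refine closure_minimal ?_ (isClosed_setOf_isSupportedOn ∅) hΛ
    rintro _ ⟨t, rfl⟩
    simpa using hsupp.mulDelta t
  have : T2Space G := hFLC.t2Space hSb
  have : LocallyCompactSpace G := hK.locallyCompactSpace_of_mem_nhds_of_addGroup
    (mem_interior_iff_mem_nhds.1 hKint.some_mem)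
  obtain ⟨𝒱, h𝒱⟩ := exists_ultrafilter_tendsto_mulDelta hΛ
  exact ⟨limitSet Sb 𝒱, limitSet_mem_pointHull (fun _ => hFLC.finite_sub_inter_sub) 𝒱,
    isSupportedOn_limitSet hlin hsupp
      (fun _ => hKM.exists_isTransBddWith_of_isCompact hlin hKint) h𝒱⟩

end
end

section
/- Let X be a compact 𝔾-stable subset of M_{(K,M)}(𝔾). Every bounded complex Radon measure μ ∈ M^b(X) defines a translation-bounded measure i(μ) ∈ M^∞(𝔾), its intensity, by ∫_𝔾 φ d i(μ) = ∫_X (∫_𝔾 φ dΛ) dμ(Λ) for all φ ∈ C_c(𝔾); if μ is a probability measure then i(μ) ∈ M_{(K,M)}(𝔾). Moreover the intensity map μ ↦ i(μ), from M^b(X) with the vague topology to M^∞(𝔾) with the vague topology, is continuous and 𝔾-commuting: i(μ(· * δ_{−t})) = i(μ) * δ_t for every t ∈ 𝔾. -/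
/-!
The intensity is `μ ∘ ev`, where `ev φ = (Λ ↦ Λ φ) ∈ C(X, ℂ)`. Linearity, vague continuity and
equivariance are inherited from the corresponding properties of `ev`, and `|i(μ)|(K + t) ≤ ‖μ‖ M`
because `‖ev φ‖_∞ ≤ M` for every test function `φ` on `K + t` bounded by `1`. The sharp bound for a
probability measure is `‖μ‖ = μ 1 = 1`, which holds for every positive functional on a unital
C⋆-algebra by the Cauchy–Schwarz inequality in its GNS space.
-/

open MeasureTheory Filter Topology Set Pointwise CompactlySupported

noncomputable section

variable {G : Type*} [AddCommGroup G] [TopologicalSpace G] [IsTopologicalAddGroup G]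

variable [MeasurableSpace G]

variable (X : Set (C_c(G, ℂ) → ℂ))

/-- Evaluation of measures in `X` at a fixed test function, as a continuous function on `X`. -/
def evalCM (φ : C_c(G, ℂ)) : C(↥X, ℂ) :=
  ⟨fun Λ => (Λ : C_c(G, ℂ) → ℂ) φ, (continuous_apply φ).comp continuous_subtype_val⟩

/-- The intensity of a bounded complex Radon measure `μ ∈ M^b(X)` (realized via Riesz duality
as an element of the weak-* dual of `C(X, ℂ)`): `∫ φ d(i μ) = ∫_X (∫ φ dΛ) dμ(Λ)`. -/
def intensity (μ : WeakDual ℂ C(↥X, ℂ)) : C_c(G, ℂ) → ℂ := fun φ => μ (evalCM X φ)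

/-- The action `Λ ↦ Λ * δ_t` on `X`, as a continuous self map of `X`. -/
def actCM (hst : ∀ Λ ∈ X, ∀ t : G, mulDelta Λ t ∈ X) (t : G) : C(↥X, ↥X) :=
  ⟨fun Λ => ⟨mulDelta (Λ : C_c(G, ℂ) → ℂ) t, hst Λ.1 Λ.2 t⟩,
    Continuous.subtype_mk
      ((continuous_pi fun φ => continuous_apply (translateCc t φ)).comp
        continuous_subtype_val) _⟩

/-- Pre-composition with a continuous self map of `X`, as a continuous linear operator on
`C(X, ℂ)` with the compact-open topology. -/
def precompL (α : C(↥X, ↥X)) : C(↥X, ℂ) →L[ℂ] C(↥X, ℂ) :=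
  { toFun := fun f => f.comp α
    map_add' := fun f g => by ext x; rfl
    map_smul' := fun c f => by ext x; rfl
    cont := ContinuousMap.continuous_precomp α }

/-- The natural `G`-action `μ.t = μ(· * δ_{-t})` on `M^b(X)`, realized on the weak-* dual. -/
def actWD (hst : ∀ Λ ∈ X, ∀ t : G, mulDelta Λ t ∈ X) (t : G)
    (μ : WeakDual ℂ C(↥X, ℂ)) : WeakDual ℂ C(↥X, ℂ) :=
  ContinuousLinearMap.comp (μ : C(↥X, ℂ) →L[ℂ] ℂ) (precompL X (actCM X hst t))

/-- Positivity of a functional on `C(X, ℂ)`. -/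
def IsPositiveWD (μ : WeakDual ℂ C(↥X, ℂ)) : Prop :=
  ∀ f : C(↥X, ℂ), (∀ x, (f x).im = 0 ∧ 0 ≤ (f x).re) → (μ f).im = 0 ∧ 0 ≤ (μ f).re


end

open scoped ComplexOrder

namespace PositiveLinearMap

variable {A : Type*} [CStarAlgebra A] [PartialOrder A] [StarOrderedRing A]

/-- Cauchy–Schwarz for the GNS semi-inner product `⟪a, b⟫ = f (star a * b)` at `1` and `a`. -/
lemma norm_apply_le_norm_apply_one_mul (f : A →ₚ[ℂ] ℂ) (a : A) :
    ‖f a‖ ≤ ‖f 1‖ * ‖a‖ := by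
  have hnorm_sq (b : A) : ‖f.toPreGNS b‖ ^ 2 = ‖f (star b * b)‖ := by
    simpa using congrArg norm (f.preGNS_norm_sq (f.toPreGNS b))
  have hcs : ‖f a‖ ≤ ‖f.toPreGNS 1‖ * ‖f.toPreGNS a‖ := by
    simpa [preGNS_inner_def] using norm_inner_le_norm (𝕜 := ℂ) (f.toPreGNS 1) (f.toPreGNS a)
  refine le_of_pow_le_pow_left₀ two_ne_zero (by positivity) ?_
  calc ‖f a‖ ^ 2 ≤ (‖f.toPreGNS 1‖ * ‖f.toPreGNS a‖) ^ 2 := by gcongr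
    _ = ‖f 1‖ * ‖f (star a * a)‖ := by rw [mul_pow, hnorm_sq, hnorm_sq, star_one, one_mul]
    _ ≤ ‖f 1‖ * (‖f 1‖ * ‖star a * a‖) := by
        gcongr; exact f.norm_apply_le_of_nonneg _ (star_mul_self_nonneg a)
    _ = (‖f 1‖ * ‖a‖) ^ 2 := by rw [CStarRing.norm_star_mul_self]; ring

end PositiveLinearMap

section Intensity

variable {G : Type*} [TopologicalSpace G] {X : Set (C_c(G, ℂ) → ℂ)} {μ : WeakDual ℂ C(↥X, ℂ)}

lemma IsPositiveWD.map_nonneg (hμ : IsPositiveWD X μ) {f : C(↥X, ℂ)} (hf : 0 ≤ f) : 0 ≤ μ f := by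
  have hf' (x : ↥X) : (f x).im = 0 ∧ 0 ≤ (f x).re := by
    obtain ⟨hre, him⟩ := Complex.nonneg_iff.mp (hf x)
    exact ⟨him.symm, hre⟩
  obtain ⟨him, hre⟩ := hμ f hf'
  exact Complex.nonneg_iff.mpr ⟨hre, him.symm⟩

lemma IsPositiveWD.norm_apply_le [CompactSpace ↥X] (hμ : IsPositiveWD X μ) (f : C(↥X, ℂ)) :
    ‖μ f‖ ≤ ‖μ 1‖ * ‖f‖ :=
  (PositiveLinearMap.mk₀ (μ : C(↥X, ℂ) →L[ℂ] ℂ).toLinearMap fun _ ↦ hμ.map_nonneg)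
    |>.norm_apply_le_norm_apply_one_mul f

lemma evalCM_smul_add (hlin : ∀ Λ ∈ X, IsLinearFunc Λ) (c : ℂ) (φ ψ : C_c(G, ℂ)) :
    evalCM X (c • φ + ψ) = c • evalCM X φ + evalCM X ψ := by
  ext ⟨Λ, hΛ⟩
  exact hlin Λ hΛ c φ ψ

lemma isLinearFunc_intensity (hlin : ∀ Λ ∈ X, IsLinearFunc Λ) (μ : WeakDual ℂ C(↥X, ℂ)) :
    IsLinearFunc (intensity X μ) := fun c φ ψ ↦ by
  simp only [intensity, evalCM_smul_add hlin, map_add, map_smul, smul_eq_mul]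

section Bounds

variable [CompactSpace ↥X] {A : Set G} {M : ℝ}

lemma norm_evalCM_le (hbdd : ∀ Λ ∈ X, AbsBoundedOn Λ A M) {φ : C_c(G, ℂ)}
    (hsupp : tsupport φ ⊆ A) (hφ : ∀ x, ‖φ x‖ ≤ 1) : ‖evalCM X φ‖ ≤ max M 0 :=
  (ContinuousMap.norm_le _ (le_max_right M 0)).mpr fun Λ ↦
    (hbdd Λ.1 Λ.2 φ hsupp hφ).trans (le_max_left M 0)

lemma absBoundedOn_intensity (hbdd : ∀ Λ ∈ X, AbsBoundedOn Λ A M) (μ : WeakDual ℂ C(↥X, ℂ)) :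
    AbsBoundedOn (intensity X μ) A (‖WeakDual.toStrongDual μ‖ * max M 0) := fun φ hsupp hφ ↦
  calc ‖intensity X μ φ‖ ≤ ‖WeakDual.toStrongDual μ‖ * ‖evalCM X φ‖ :=
        (WeakDual.toStrongDual μ).le_opNorm _
    _ ≤ ‖WeakDual.toStrongDual μ‖ * max M 0 := by gcongr; exact norm_evalCM_le hbdd hsupp hφ

lemma absBoundedOn_intensity_of_isPositiveWD (hbdd : ∀ Λ ∈ X, AbsBoundedOn Λ A M)
    (hμ : IsPositiveWD X μ) (h1 : μ 1 = 1) :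
    AbsBoundedOn (intensity X μ) A M := fun φ hsupp hφ ↦ by
  have : Nonempty ↥X := by
    by_contra hX
    rw [not_nonempty_iff] at hX
    simp [Subsingleton.elim (1 : C(↥X, ℂ)) 0] at h1
  calc ‖intensity X μ φ‖ ≤ ‖μ 1‖ * ‖evalCM X φ‖ := hμ.norm_apply_le _
    _ ≤ M := by
      rw [h1, norm_one, one_mul, ContinuousMap.norm_le_of_nonempty]
      exact fun Λ ↦ hbdd Λ.1 Λ.2 φ hsupp hφ

end Bounds

lemma continuous_intensity : Continuous (intensity X) :=
  continuous_pi fun φ ↦ WeakDual.eval_continuous (evalCM X φ)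

lemma intensity_actWD [AddCommGroup G] [IsTopologicalAddGroup G]
    (hst : ∀ Λ ∈ X, ∀ t : G, mulDelta Λ t ∈ X) (μ : WeakDual ℂ C(↥X, ℂ)) (t : G) :
    intensity X (actWD X hst t μ) = mulDelta (intensity X μ) t :=
  rfl

end Intensity

section

variable {G : Type*} [AddCommGroup G] [TopologicalSpace G] [IsTopologicalAddGroup G]
  [MeasurableSpace G] (X : Set (C_c(G, ℂ) → ℂ))

/-- Theorem `theo:intensity` and Proposition `prop:barycenter`. Let `X` be a
compact `G`-stable subset of `M_{(K, M)}(G)`.  Every bounded complex Radon measure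
`μ ∈ M^b(X)` defines a translation-bounded measure `i(μ) ∈ M^∞(G)`, its intensity, via
`∫ φ d(i μ) = ∫_X (∫ φ dΛ) dμ(Λ)`; if `μ` is a probability measure then
`i(μ) ∈ M_{(K, M)}(G)`.  Moreover the intensity map is vaguely continuous and `G`-commuting:
`i(μ(· * δ_{-t})) = i(μ) * δ_t`. -/
theorem intensity_map_properties
    (K : Set G) (M : ℝ) (hK : IsCompact K) (hKint : (interior K).Nonempty)
    (hXc : IsCompact X)
    (hX : ∀ Λ ∈ X, IsLinearFunc Λ ∧ IsTransBddWith Λ K M)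
    (hst : ∀ Λ ∈ X, ∀ t : G, mulDelta Λ t ∈ X) :
    (∀ μ : WeakDual ℂ C(↥X, ℂ), IsLinearFunc (intensity X μ) ∧
      ∃ (K' : Set G) (M' : ℝ), IsCompact K' ∧ (interior K').Nonempty ∧
        IsTransBddWith (intensity X μ) K' M') ∧
    (∀ μ : WeakDual ℂ C(↥X, ℂ), IsPositiveWD X μ → μ (1 : C(↥X, ℂ)) = 1 →
      IsTransBddWith (intensity X μ) K M) ∧
    Continuous (intensity X) ∧
    (∀ (μ : WeakDual ℂ C(↥X, ℂ)) (t : G),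
      intensity X (actWD X hst t μ) = mulDelta (intensity X μ) t) := by
  have : CompactSpace ↥X := isCompact_iff_compactSpace.mp hXc
  have hlin : ∀ Λ ∈ X, IsLinearFunc Λ := fun Λ hΛ ↦ (hX Λ hΛ).1
  have hbdd (t : G) : ∀ Λ ∈ X, AbsBoundedOn Λ ((· + t) '' K) M := fun Λ hΛ ↦ (hX Λ hΛ).2 t
  refine ⟨fun μ ↦ ⟨isLinearFunc_intensity hlin μ, K, _, hK, hKint,
      fun t ↦ absBoundedOn_intensity (hbdd t) μ⟩,
    fun μ hμ h1 t ↦ absBoundedOn_intensity_of_isPositiveWD (hbdd t) hμ h1,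
    continuous_intensity, intensity_actWD hst⟩

end
end
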